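/- Consider the discrete-time optimal control problem: minimize J(u) = ‖x_m(u)‖² + ε ∑_{k=0}^{m−1} ‖u_k‖² over control sequences u = (u_0,…,u_{m−1}) ∈ (ℝ^p)^m, where x_0(u) = x_0 and x_{k+1}(u) = f_k(x_k(u), u_k). If each f_k is differentiable and u* is a local minimizer of J, then for every k ∈ {0,…,m−1} the optimal control satisfies the explicit formula u*_k = −(1/ε) (D_u f_k)ᵀ (D_x f_{k+1})ᵀ (D_x f_{k+2})ᵀ ⋯ (D_x f_{m−1})ᵀ x_m(u*); equivalently, u*_k = −(1/ε) (D_u f_k)ᵀ applied to the adjoint of the composition D_x f_{m−1} ∘ ⋯ ∘ D_x f_{k+1} evaluated at x_m(u*), where all partial derivatives are taken along the trajectory of u* (for k = m−1 the product of state Jacobians is the identity). -/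

import Mathlib

/-!
Freeze every control except `u_k`. The cost becomes `v ↦ ‖x_m(v)‖² + ε‖v‖² + const`, and by the
chain rule along the recursion `x_m(v)` has derivative `A = (D_x f_{m−1} ∘ ⋯ ∘ D_x f_{k+1}) ∘ D_u f_k`
at `v = u*_k`. At a local minimum the gradient `2 Aᵀ x_m + 2 ε v` vanishes, which is the formula.
-/

noncomputable section

open scoped BigOperators

/-- The trajectory `x_k(u)` generated by the dynamics `x_{k+1} = f_k(x_k, u_k)`. -/
def traj {n p : ℕ}
    (f : ℕ → EuclideanSpace ℝ (Fin n) × EuclideanSpace ℝ (Fin p) → EuclideanSpace ℝ (Fin n))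
    (x0 : EuclideanSpace ℝ (Fin n)) (u : ℕ → EuclideanSpace ℝ (Fin p)) :
    ℕ → EuclideanSpace ℝ (Fin n)
  | 0 => x0
  | k + 1 => f k (traj f x0 u k, u k)

/-- Extension of a finite control sequence `u : (ℝ^p)^m` to all of `ℕ` (by `0`). -/
def extCtrl {p : ℕ} (m : ℕ) (u : Fin m → EuclideanSpace ℝ (Fin p)) :
    ℕ → EuclideanSpace ℝ (Fin p) :=
  fun k => if h : k < m then u ⟨k, h⟩ else 0

/-- The cost `J(u) = ‖x_m(u)‖² + ε ∑_{k=0}^{m-1} ‖u_k‖²`. -/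
def cost {n p : ℕ} (m : ℕ)
    (f : ℕ → EuclideanSpace ℝ (Fin n) × EuclideanSpace ℝ (Fin p) → EuclideanSpace ℝ (Fin n))
    (x0 : EuclideanSpace ℝ (Fin n)) (ε : ℝ)
    (u : Fin m → EuclideanSpace ℝ (Fin p)) : ℝ :=
  ‖traj f x0 (extCtrl m u) m‖ ^ 2 + ε * ∑ k : Fin m, ‖u k‖ ^ 2

/-- `jacProd D a b = D_{b-1} ∘ D_{b-2} ∘ ⋯ ∘ D_a` (the identity if `b ≤ a`):
the ordered product of the state Jacobians from index `a` up to `b - 1`. -/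
def jacProd {E : Type*} [NormedAddCommGroup E] [NormedSpace ℝ E]
    (D : ℕ → E →L[ℝ] E) (a : ℕ) : ℕ → E →L[ℝ] E
  | 0 => ContinuousLinearMap.id ℝ E
  | b + 1 => if a ≤ b then (D b).comp (jacProd D a b) else ContinuousLinearMap.id ℝ E

open ContinuousLinearMap Function

section FirstOrder

variable {E F : Type*} [NormedAddCommGroup E] [InnerProductSpace ℝ E] [CompleteSpace E]
  [NormedAddCommGroup F] [InnerProductSpace ℝ F] [CompleteSpace F]

theorem eq_neg_one_div_smul_adjoint_of_isLocalMin {g : E → F} {A : E →L[ℝ] F} {v₀ : E}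
    (hg : HasFDerivAt g A v₀) {ε : ℝ} (hε : ε ≠ 0) (c : ℝ)
    (hmin : IsLocalMin (fun v => ‖g v‖ ^ 2 + ε * ‖v‖ ^ 2 + c) v₀) :
    v₀ = (-(1 / ε)) • adjoint A (g v₀) := by
  have hderiv := (hg.norm_sq.add ((hasFDerivAt_id v₀).norm_sq.const_mul ε)).add_const c
  have hstat : adjoint A (g v₀) + ε • v₀ = 0 := by
    refine ext_inner_right ℝ fun h => ?_
    have hzero := congr($(hmin.hasFDerivAt_eq_zero hderiv) h)
    simp only [id_eq, ContinuousLinearMap.comp_id, add_apply, smul_apply,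
      ContinuousLinearMap.comp_apply, coe_innerSL_apply, nsmul_eq_mul, Nat.cast_ofNat, smul_eq_mul,
      zero_apply] at hzero
    simp only [inner_add_left, adjoint_inner_left, real_inner_smul_left, inner_zero_left]
    linarith
  rw [eq_comm, one_div, neg_smul, ← smul_neg, inv_smul_eq_iff₀ hε]
  exact (eq_neg_of_add_eq_zero_right hstat).symm

end FirstOrder

section Jacobians

variable {E : Type*} [NormedAddCommGroup E] [NormedSpace ℝ E] (D : ℕ → E →L[ℝ] E)

theorem jacProd_self (a : ℕ) : jacProd D a a = ContinuousLinearMap.id ℝ E := by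
  cases a <;> simp [jacProd]

theorem jacProd_succ {a b : ℕ} (h : a ≤ b) : jacProd D a (b + 1) = D b ∘L jacProd D a b := by
  simp [jacProd, h]

end Jacobians

section Trajectory

variable {n p : ℕ}
  {f : ℕ → EuclideanSpace ℝ (Fin n) × EuclideanSpace ℝ (Fin p) → EuclideanSpace ℝ (Fin n)}
  {x0 : EuclideanSpace ℝ (Fin n)} {U : ℕ → EuclideanSpace ℝ (Fin p)}

theorem traj_update_of_le {j k : ℕ} (h : j ≤ k) (v : EuclideanSpace ℝ (Fin p)) :
    traj f x0 (update U k v) j = traj f x0 U j := by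
  induction j with
  | zero => rfl
  | succ j ih => simp only [traj, ih (by omega), update_of_ne (by omega : j ≠ k)]

theorem hasFDerivAt_traj_update {k b : ℕ} (hkb : k < b)
    (hf : ∀ j, k ≤ j → j < b → DifferentiableAt ℝ (f j) (traj f x0 U j, U j)) :
    HasFDerivAt (fun v => traj f x0 (update U k v) b)
      (jacProd (fun j => fderiv ℝ (fun y => f j (y, U j)) (traj f x0 U j)) (k + 1) b ∘L
        fderiv ℝ (fun v => f k (traj f x0 U k, v)) (U k)) (U k) := by
  induction b, hkb using Nat.le_induction with
  | base =>
    have hbase :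
        (fun v => traj f x0 (update U k v) (k + 1)) = fun v => f k (traj f x0 U k, v) := by
      funext v
      simp only [traj, traj_update_of_le le_rfl, update_self]
    rw [hbase, jacProd_self, ContinuousLinearMap.id_comp]
    exact ((hf k le_rfl k.lt_succ_self).comp (U k)
      ((differentiableAt_const _).prodMk differentiableAt_id)).hasFDerivAt
  | succ b hkb ih =>
    have hstep : (fun v => traj f x0 (update U k v) (b + 1)) =
        (fun y => f b (y, U b)) ∘ fun v => traj f x0 (update U k v) b := by
      funext v
      simp only [traj, comp_apply, update_of_ne (by omega : b ≠ k)]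
    have hfb : HasFDerivAt (fun y => f b (y, U b))
        (fderiv ℝ (fun y => f b (y, U b)) (traj f x0 U b)) (traj f x0 (update U k (U k)) b) := by
      rw [update_eq_self]
      exact ((hf b (by omega) (by omega)).comp (traj f x0 U b)
        (differentiableAt_id.prodMk (differentiableAt_const (U b)))).hasFDerivAt
    rw [hstep, jacProd_succ _ (by omega : k + 1 ≤ b), ContinuousLinearMap.comp_assoc]
    exact hfb.comp (U k) (ih fun j hkj hjb => hf j hkj (by omega))

end Trajectory

section Cost

variable {n p m : ℕ}

theorem extCtrl_of_lt (u : Fin m → EuclideanSpace ℝ (Fin p)) {k : ℕ} (hk : k < m) :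
    extCtrl m u k = u ⟨k, hk⟩ :=
  dif_pos hk

theorem extCtrl_update (u : Fin m → EuclideanSpace ℝ (Fin p)) (i : Fin m)
    (v : EuclideanSpace ℝ (Fin p)) :
    extCtrl m (update u i v) = update (extCtrl m u) i v := by
  funext j
  by_cases hj : j < m
  · by_cases hji : j = i
    · subst hji
      simp [extCtrl]
    · rw [update_of_ne hji, extCtrl_of_lt _ hj, extCtrl_of_lt _ hj,
        update_of_ne (fun h => hji (congrArg Fin.val h))]
  · rw [update_of_ne (by omega)]
    simp [extCtrl, hj]

theorem cost_update
    (f : ℕ → EuclideanSpace ℝ (Fin n) × EuclideanSpace ℝ (Fin p) → EuclideanSpace ℝ (Fin n))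
    (x0 : EuclideanSpace ℝ (Fin n)) (ε : ℝ) (u : Fin m → EuclideanSpace ℝ (Fin p)) (i : Fin m)
    (v : EuclideanSpace ℝ (Fin p)) :
    cost m f x0 ε (update u i v) =
      ‖traj f x0 (update (extCtrl m u) i v) m‖ ^ 2 + ε * ‖v‖ ^ 2 +
        ε * ∑ j ∈ Finset.univ \ {i}, ‖u j‖ ^ 2 := by
  have hsum : ∑ j, ‖update u i v j‖ ^ 2 = ‖v‖ ^ 2 + ∑ j ∈ Finset.univ \ {i}, ‖u j‖ ^ 2 := by
    simp_rw [apply_update (fun _ w => ‖w‖ ^ 2)]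
    exact Finset.sum_update_of_mem (Finset.mem_univ i) _ _
  rw [cost, extCtrl_update, hsum]
  ring

end Cost

theorem worst_fluctuation_formula_general {n p m : ℕ}
    (f : ℕ → EuclideanSpace ℝ (Fin n) × EuclideanSpace ℝ (Fin p) → EuclideanSpace ℝ (Fin n))
    (x0 : EuclideanSpace ℝ (Fin n)) (ε : ℝ) (hε : 0 < ε)
    (hf : ∀ k < m, Differentiable ℝ (f k))
    (ustar : Fin m → EuclideanSpace ℝ (Fin p))
    (hmin : IsLocalMin (cost m f x0 ε) ustar) :
    ∀ k (hk : k < m),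
      ustar ⟨k, hk⟩ =
        (-(1 / ε)) •
          (ContinuousLinearMap.adjoint
            (fderiv ℝ (fun v => f k (traj f x0 (extCtrl m ustar) k, v)) (extCtrl m ustar k)))
          ((ContinuousLinearMap.adjoint
              (jacProd (fun j =>
                fderiv ℝ (fun y => f j (y, extCtrl m ustar j)) (traj f x0 (extCtrl m ustar) j))
                (k + 1) m))
            (traj f x0 (extCtrl m ustar) m)) := by
  intro k hk
  set U := extCtrl m ustar
  have hUk : U k = ustar ⟨k, hk⟩ := extCtrl_of_lt ustar hk
  have hslice : IsLocalMin (fun v => cost m f x0 ε (update ustar ⟨k, hk⟩ v)) (U k) := by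
    rw [hUk]
    refine IsLocalMin.comp_continuous (f := cost m f x0 ε) ?_
      ((continuous_const (y := ustar)).update _ continuous_id).continuousAt
    rwa [update_eq_self]
  simp only [cost_update] at hslice
  have htraj := hasFDerivAt_traj_update (x0 := x0) (U := U) hk
    fun j _ hj => (hf j hj).differentiableAt
  have hformula := eq_neg_one_div_smul_adjoint_of_isLocalMin htraj hε.ne' _ hslice
  rw [update_eq_self, adjoint_comp] at hformula
  rw [← hUk]
  exact hformula

theorem worst_fluctuation_formula {n p m : ℕ} (hm : 1 ≤ m)
    (f : ℕ → EuclideanSpace ℝ (Fin n) × EuclideanSpace ℝ (Fin p) → EuclideanSpace ℝ (Fin n))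
    (x0 : EuclideanSpace ℝ (Fin n)) (ε : ℝ) (hε : 0 < ε)
    (hf : ∀ k < m, Differentiable ℝ (f k))
    (ustar : Fin m → EuclideanSpace ℝ (Fin p))
    (hmin : IsLocalMin (cost m f x0 ε) ustar) :
    ∀ k (hk : k < m),
      ustar ⟨k, hk⟩ =
        (-(1 / ε)) •
          (ContinuousLinearMap.adjoint
            (fderiv ℝ (fun v => f k (traj f x0 (extCtrl m ustar) k, v)) (extCtrl m ustar k)))
          ((ContinuousLinearMap.adjoint
              (jacProd (fun j =>
                fderiv ℝ (fun y => f j (y, extCtrl m ustar j)) (traj f x0 (extCtrl m ustar) j))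
                (k + 1) m))
            (traj f x0 (extCtrl m ustar) m)) :=
  worst_fluctuation_formula_general f x0 ε hε hf ustar hmin
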